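/- arXiv:2206.05969 — 2 statements merged into one kernel-verified Lean document; each statement's English description precedes it below -/
import Mathlib

section
/- Let q, U, Q be commuting indeterminates and let l be a positive integer. Define φ_r(x) = ∏_{i=1}^r (1 − x^i) with φ_0(x) = 1. Then in the ring of formal Laurent polynomials, ∏_{i=1}^l (1 − U^{-1} Q q^{-i+1}) · U^l = ∑_{m=0}^l (φ_l(q^{-1}) / (φ_{l−m}(q^{-1}) φ_m(q^{-1}))) · ∏_{i=1}^{l−m} (1 − Q q^{-i+1}) · ∏_{i=1}^m (1 − U q^{i−1}) · (−1)^m q^{(m − m²)/2}. -/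
/-!
Multiplying each factor by `U`, the left side is `∏_{i<l} (U - Q q^{-i})`. With `t = q⁻¹` and the
Gaussian binomial `[n, m]_t` defined by the `t`-Pascal rule, this product equals
`∑_m [n, m]_t T(n, m)`, where `T(n, m)` (`binomTerm`) is the summand of the statement without its
coefficient: multiplying `T(n, m)` by the new factor `U - Q q^{-n}` gives
`t^m T(n+1, m) + T(n+1, m+1)`, and the `t`-Pascal rule reassembles the sum. Finally
`[n, m]_t φ_m φ_{n-m} = φ_n`, so the Gaussian binomial is the quotient `φ_n / (φ_{n-m} φ_m)` of the
statement as soon as `φ` does not vanish.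
-/

open Finset

def qFactorial {R : Type*} [CommRing R] (t : R) (r : ℕ) : R :=
  ∏ i ∈ range r, (1 - t ^ (i + 1))

def gaussBinom {R : Type*} [Semiring R] (t : R) : ℕ → ℕ → R
  | _, 0 => 1
  | 0, _ + 1 => 0
  | n + 1, k + 1 => t ^ (k + 1) * gaussBinom t n (k + 1) + gaussBinom t n k

section CommSemiring

variable {R : Type*} [CommSemiring R] (t : R)

@[simp]
theorem gaussBinom_zero_right (n : ℕ) : gaussBinom t n 0 = 1 := by
  cases n <;> rfl

theorem gaussBinom_succ_succ (n k : ℕ) :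
    gaussBinom t (n + 1) (k + 1) = t ^ (k + 1) * gaussBinom t n (k + 1) + gaussBinom t n k :=
  rfl

theorem gaussBinom_eq_zero_of_lt {n k : ℕ} (h : n < k) : gaussBinom t n k = 0 := by
  induction n generalizing k with
  | zero => obtain ⟨k, rfl⟩ := Nat.exists_eq_succ_of_ne_zero h.ne'; rfl
  | succ n ih =>
    obtain ⟨k, rfl⟩ := Nat.exists_eq_succ_of_ne_zero (Nat.ne_zero_of_lt h)
    rw [gaussBinom_succ_succ, ih (by omega), ih (by omega), mul_zero, add_zero]

@[simp]
theorem gaussBinom_self (n : ℕ) : gaussBinom t n n = 1 := by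
  induction n with
  | zero => rfl
  | succ n ih => rw [gaussBinom_succ_succ, gaussBinom_eq_zero_of_lt t n.lt_succ_self, ih]; simp

theorem sum_range_gaussBinom_succ_mul (f : ℕ → R) (n : ℕ) :
    ∑ m ∈ range (n + 2), gaussBinom t (n + 1) m * f m
      = ∑ m ∈ range (n + 1), gaussBinom t n m * (t ^ m * f m + f (m + 1)) := by
  calc ∑ m ∈ range (n + 2), gaussBinom t (n + 1) m * f m
      = ∑ m ∈ range (n + 2), gaussBinom t n m * (t ^ m * f m)
        + ∑ m ∈ range (n + 1), gaussBinom t n m * f (m + 1) := by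
        simp only [sum_range_succ' _ (n + 1), gaussBinom_succ_succ, add_mul, sum_add_distrib,
          gaussBinom_zero_right, pow_zero, one_mul, mul_assoc, mul_left_comm (t ^ _)]
        abel
    _ = ∑ m ∈ range (n + 1), gaussBinom t n m * (t ^ m * f m + f (m + 1)) := by
        rw [sum_range_succ _ (n + 1), gaussBinom_eq_zero_of_lt t n.lt_succ_self]
        simp only [zero_mul, add_zero, mul_add, sum_add_distrib]

end CommSemiring

section CommRing

variable {R : Type*} [CommRing R] (t : R)

theorem qFactorial_succ (r : ℕ) : qFactorial t (r + 1) = qFactorial t r * (1 - t ^ (r + 1)) :=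
  prod_range_succ _ r

@[simp]
theorem qFactorial_zero : qFactorial t 0 = 1 :=
  prod_range_zero _

theorem gaussBinom_mul_qFactorial_mul_qFactorial {n k : ℕ} (h : k ≤ n) :
    gaussBinom t n k * qFactorial t k * qFactorial t (n - k) = qFactorial t n := by
  induction n generalizing k with
  | zero => obtain rfl := Nat.le_zero.mp h; simp
  | succ n ih =>
    rcases k with _ | k
    · simp
    obtain rfl | hk := (Nat.succ_le_succ_iff.mp h).eq_or_lt
    · simp
    obtain ⟨d, rfl⟩ := Nat.exists_eq_add_of_lt hk
    have ih₁ := ih (k := k + 1) hk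
    have ih₀ := ih (k := k) hk.le
    rw [show k + d + 1 - (k + 1) = d by omega, qFactorial_succ t k] at ih₁
    rw [show k + d + 1 - k = d + 1 by omega, qFactorial_succ] at ih₀
    rw [show k + d + 1 + 1 - (k + 1) = d + 1 by omega, gaussBinom_succ_succ,
      qFactorial_succ t k, qFactorial_succ t d, qFactorial_succ t (k + d + 1)]
    linear_combination t ^ (k + 1) * (1 - t ^ (d + 1)) * ih₁ + (1 - t ^ (k + 1)) * ih₀

end CommRing

section Field

variable {F : Type*} [Field F]

theorem gaussBinom_eq_div (t : F) {n k : ℕ} (h : k ≤ n) (hk : qFactorial t k ≠ 0)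
    (hnk : qFactorial t (n - k) ≠ 0) :
    gaussBinom t n k = qFactorial t n / (qFactorial t (n - k) * qFactorial t k) := by
  rw [eq_div_iff (mul_ne_zero hnk hk), ← gaussBinom_mul_qFactorial_mul_qFactorial t h]
  ring

theorem zpow_sub_sq_div_two_succ {q : F} (hq : q ≠ 0) (m : ℕ) :
    q ^ ((((m + 1 : ℕ) : ℤ) - ((m + 1 : ℕ) : ℤ) ^ 2) / 2)
      = q ^ (((m : ℤ) - (m : ℤ) ^ 2) / 2) * q ^ (-(m : ℤ)) := by
  rw [← zpow_add₀ hq, ← Int.add_mul_ediv_right _ _ two_ne_zero]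
  push_cast
  ring_nf

def binomTerm (q U Q : F) (n m : ℕ) : F :=
  (∏ i ∈ range (n - m), (1 - Q * q ^ (-(i : ℤ)))) * (∏ i ∈ range m, (1 - U * q ^ (i : ℤ)))
    * ((-1) ^ m * q ^ (((m : ℤ) - (m : ℤ) ^ 2) / 2))

variable {q : F} (hq : q ≠ 0) (U Q : F)
include hq

theorem binomTerm_mul_sub {n m : ℕ} (h : m ≤ n) :
    binomTerm q U Q n m * (U - Q * q ^ (-(n : ℤ)))
      = q⁻¹ ^ m * binomTerm q U Q (n + 1) m + binomTerm q U Q (n + 1) (m + 1) := by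
  have hq_inv : q⁻¹ ^ m = q ^ (-(m : ℤ)) := by rw [zpow_neg, zpow_natCast, inv_pow]
  have hq_add : q ^ (-(m : ℤ)) * q ^ (-((n - m : ℕ) : ℤ)) = q ^ (-(n : ℤ)) := by
    rw [← zpow_add₀ hq, Nat.cast_sub h]; ring_nf
  have hq_cancel : q ^ (m : ℤ) * q ^ (-(m : ℤ)) = 1 := by rw [← zpow_add₀ hq]; simp
  simp only [binomTerm, Nat.succ_sub h, Nat.add_sub_add_right, prod_range_succ,
    zpow_sub_sq_div_two_succ hq, hq_inv]
  linear_combination (∏ i ∈ range (n - m), (1 - Q * q ^ (-(i : ℤ))))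
    * (∏ i ∈ range m, (1 - U * q ^ (i : ℤ))) * ((-1) ^ m * q ^ (((m : ℤ) - (m : ℤ) ^ 2) / 2))
    * (Q * hq_add - U * hq_cancel)

theorem prod_range_sub_eq_sum_gaussBinom_mul_binomTerm (n : ℕ) :
    ∏ i ∈ range n, (U - Q * q ^ (-(i : ℤ)))
      = ∑ m ∈ range (n + 1), gaussBinom q⁻¹ n m * binomTerm q U Q n m := by
  induction n with
  | zero => simp [binomTerm]
  | succ n ih =>
    rw [prod_range_succ, ih, sum_mul, sum_range_gaussBinom_succ_mul]
    refine sum_congr rfl fun m hm => ?_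
    rw [mul_assoc, binomTerm_mul_sub hq U Q (Nat.lt_succ_iff.mp (mem_range.mp hm))]

end Field

theorem q_binomial_identity_general (F : Type*) [Field F] (q U Q : F) (hq : q ≠ 0) (hU : U ≠ 0)
    (l : ℕ)
    (φ : ℕ → F) (hφ : ∀ r : ℕ, φ r = ∏ i ∈ Finset.range r, (1 - (q⁻¹) ^ (i + 1)))
    (hφne : ∀ m : ℕ, m ≤ l → φ m ≠ 0) :
    (∏ i ∈ Finset.range l, (1 - U⁻¹ * Q * q ^ (-(i : ℤ)))) * U ^ l
      = ∑ m ∈ Finset.range (l + 1),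
          φ l / (φ (l - m) * φ m)
            * (∏ i ∈ Finset.range (l - m), (1 - Q * q ^ (-(i : ℤ))))
            * (∏ i ∈ Finset.range m, (1 - U * q ^ (i : ℤ)))
            * (-1) ^ m * q ^ (((m : ℤ) - (m : ℤ) ^ 2) / 2) := by
  obtain rfl : φ = qFactorial q⁻¹ := funext hφ
  have hU_mul : ∀ x : F, (1 - U⁻¹ * x) * U = U - x := fun x => by field_simp
  have hLHS : (∏ i ∈ range l, (1 - U⁻¹ * Q * q ^ (-(i : ℤ)))) * U ^ l
      = ∏ i ∈ range l, (U - Q * q ^ (-(i : ℤ))) := by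
    simpa only [card_range, mul_assoc U⁻¹, hU_mul] using
      prod_mul_pow_card (s := range l) (f := fun i : ℕ => 1 - U⁻¹ * Q * q ^ (-(i : ℤ))) (b := U)
  rw [hLHS, prod_range_sub_eq_sum_gaussBinom_mul_binomTerm hq]
  refine sum_congr rfl fun m hm => ?_
  have hm : m ≤ l := Nat.lt_succ_iff.mp (mem_range.mp hm)
  rw [gaussBinom_eq_div _ hm (hφne m hm) (hφne _ (Nat.sub_le l m)), binomTerm]
  ring

/-- The q-binomial type identity (Lemma 5.13 of [KK15]):
`∏_{i=1}^l (1 - U⁻¹ Q q^{-i+1}) U^l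
  = ∑_{m=0}^l (φ_l(q⁻¹)/(φ_{l-m}(q⁻¹) φ_m(q⁻¹))) ∏_{i=1}^{l-m}(1 - Q q^{-i+1})
      ∏_{i=1}^m (1 - U q^{i-1}) (-1)^m q^{(m-m²)/2}`,
where `φ_r(x) = ∏_{i=1}^r (1 - x^i)`. (Note `m - m²` is always even.) -/
theorem q_binomial_identity (F : Type*) [Field F] (q U Q : F) (hq : q ≠ 0) (hU : U ≠ 0)
    (l : ℕ) (hl : 1 ≤ l)
    (φ : ℕ → F) (hφ : ∀ r : ℕ, φ r = ∏ i ∈ Finset.range r, (1 - (q⁻¹) ^ (i + 1)))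
    (hφne : ∀ m : ℕ, m ≤ l → φ m ≠ 0) :
    (∏ i ∈ Finset.range l, (1 - U⁻¹ * Q * q ^ (-(i : ℤ)))) * U ^ l
      = ∑ m ∈ Finset.range (l + 1),
          φ l / (φ (l - m) * φ m)
            * (∏ i ∈ Finset.range (l - m), (1 - Q * q ^ (-(i : ℤ))))
            * (∏ i ∈ Finset.range m, (1 - U * q ^ (i : ℤ)))
            * (-1) ^ m * q ^ (((m : ℤ) - (m : ℤ) ^ 2) / 2) :=
  q_binomial_identity_general F q U Q hq hU l φ hφ hφne
end

section
/- The function δ(s) = ∏_{i=1}^{N} Γ(s − c + (n − i + 2)/2) / Γ(s − c + i/2 + 1/2), where c = (k₁+k₂)/2, n is an even positive integer, and N = n/2 if n ≡ 0 mod 4 and N = n/2 − 1 if n ≡ 2 mod 4, satisfies the symmetry δ(k₁ + k₂ − (n+1)/2 − s) = δ(s) as meromorphic functions of s, for any fixed real numbers k₁, k₂. -/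
/-!
Write `v i` and `w i` for the arguments of the upper and lower gamma factors of the `i`-th
term. The substitution `s ↦ k₁ + k₂ - (n+1)/2 - s` turns them into `1 - w i` and `1 - v i`, so
by the reflection formula `Γ(z)Γ(1-z) = π / sin(πz)` the symmetry reduces to
`∏ sin(π v i) = ∏ sin(π w i)`. Writing `n = N + 2m`, one has `v i = w (N+1-i) + m`, so the two
sine products agree up to the sign `(-1)^(mN)`, which is `1` because `N` is even.
-/

open Complex
open scoped Real

namespace Finset

theorem prod_Icc_one_reflect {M : Type*} [CommMonoid M] (f : ℕ → M) (N : ℕ) :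
    ∏ i ∈ Icc 1 N, f (N + 1 - i) = ∏ i ∈ Icc 1 N, f i := by
  rw [← Ico_add_one_right_eq_Icc, prod_Ico_reflect f 1 (Nat.le_succ _)]
  simp

end Finset

namespace Complex

open Finset

theorem prod_Icc_sin_pi_mul_reflect_add_nat (f : ℕ → ℂ) {N m : ℕ} (hmN : Even (m * N)) :
    ∏ i ∈ Icc 1 N, sin (π * (f (N + 1 - i) + m)) = ∏ i ∈ Icc 1 N, sin (π * f i) := by
  have hshift : ∀ x : ℂ, sin (π * (x + m)) = (-1) ^ m * sin (π * x) := fun x => by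
    rw [mul_add, mul_comm (π : ℂ) m, sin_antiperiodic.add_nat_mul_eq]
  simp_rw [hshift, prod_mul_distrib, prod_const, Nat.card_Icc, Nat.add_sub_cancel, ← pow_mul,
    hmN.neg_one_pow, one_mul, prod_Icc_one_reflect (fun i => sin (π * f i))]

theorem prod_Gamma_one_sub_div_eq {ι : Type*} {S : Finset ι} {v w : ι → ℂ}
    (hv : ∀ i ∈ S, Gamma (1 - v i) ≠ 0) (hw : ∀ i ∈ S, Gamma (w i) ≠ 0)
    (hsin : ∏ i ∈ S, sin (π * v i) = ∏ i ∈ S, sin (π * w i)) :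
    ∏ i ∈ S, Gamma (1 - w i) / Gamma (1 - v i) = ∏ i ∈ S, Gamma (v i) / Gamma (w i) := by
  have hreflect : ∀ u : ι → ℂ,
      ∏ i ∈ S, Gamma (u i) * Gamma (1 - u i) = π ^ S.card / ∏ i ∈ S, sin (π * u i) := fun u => by
    simp_rw [Gamma_mul_Gamma_one_sub, prod_div_distrib, prod_const]
  rw [prod_div_distrib, prod_div_distrib, div_eq_div_iff (prod_ne_zero_iff.mpr hv)
    (prod_ne_zero_iff.mpr hw), ← prod_mul_distrib, ← prod_mul_distrib]
  simp_rw [mul_comm (Gamma (1 - w _)), hreflect, hsin]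

end Complex

theorem even_and_exists_eq_add_two_mul {n N : ℕ} (hn : Even n)
    (hN : N = if n % 4 = 0 then n / 2 else n / 2 - 1) : Even N ∧ ∃ m, n = N + 2 * m := by
  rw [Nat.even_iff] at hn ⊢
  refine ⟨?_, (n - N) / 2, ?_⟩ <;> split_ifs at hN <;> omega

theorem gamma_factor_symmetry_general (n : ℕ) (hn : Even n) (k₁ k₂ : ℝ)
    (N : ℕ) (hN : N = if n % 4 = 0 then n / 2 else n / 2 - 1)
    (d : ℂ → ℂ)
    (hd : ∀ s : ℂ, d s = ∏ i ∈ Finset.Icc 1 N,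
      Complex.Gamma (s - ((k₁ : ℂ) + (k₂ : ℂ)) / 2 + ((n : ℂ) - (i : ℂ) + 2) / 2) /
        Complex.Gamma (s - ((k₁ : ℂ) + (k₂ : ℂ)) / 2 + (i : ℂ) / 2 + 1 / 2))
    (s : ℂ)
    (hreg : ∀ i ∈ Finset.Icc 1 N, ∀ m : ℕ,
      (s - ((k₁ : ℂ) + (k₂ : ℂ)) / 2 + ((n : ℂ) - (i : ℂ) + 2) / 2 ≠ -(m : ℂ)) ∧
      (s - ((k₁ : ℂ) + (k₂ : ℂ)) / 2 + (i : ℂ) / 2 + 1 / 2 ≠ -(m : ℂ)) ∧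
      (((k₁ : ℂ) + (k₂ : ℂ) - ((n : ℂ) + 1) / 2 - s) - ((k₁ : ℂ) + (k₂ : ℂ)) / 2
          + ((n : ℂ) - (i : ℂ) + 2) / 2 ≠ -(m : ℂ)) ∧
      (((k₁ : ℂ) + (k₂ : ℂ) - ((n : ℂ) + 1) / 2 - s) - ((k₁ : ℂ) + (k₂ : ℂ)) / 2
          + (i : ℂ) / 2 + 1 / 2 ≠ -(m : ℂ))) :
    d ((k₁ : ℂ) + (k₂ : ℂ) - ((n : ℂ) + 1) / 2 - s) = d s := by
  obtain ⟨hNeven, m, hnm⟩ := even_and_exists_eq_add_two_mul hn hN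
  set c : ℂ := ((k₁ : ℂ) + (k₂ : ℂ)) / 2
  set v : ℕ → ℂ := fun i => s - c + ((n : ℂ) - (i : ℂ) + 2) / 2
  set w : ℕ → ℂ := fun i => s - c + (i : ℂ) / 2 + 1 / 2
  have hv_shift : ∀ i ∈ Finset.Icc 1 N, v i = w (N + 1 - i) + m := fun i hi => by
    rw [Finset.mem_Icc] at hi
    simp only [v, w, hnm, Nat.cast_sub (by omega : i ≤ N + 1)]
    push_cast
    ring
  have hsin : ∏ i ∈ Finset.Icc 1 N, sin (π * v i) = ∏ i ∈ Finset.Icc 1 N, sin (π * w i) :=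
    (Finset.prod_congr rfl fun i hi => by rw [hv_shift i hi]).trans
      (prod_Icc_sin_pi_mul_reflect_add_nat w (hNeven.mul_left m))
  have hw_reflect : ∀ i : ℕ, ((k₁ : ℂ) + (k₂ : ℂ) - ((n : ℂ) + 1) / 2 - s) - c
      + ((n : ℂ) - (i : ℂ) + 2) / 2 = 1 - w i := fun i => by simp only [w, c]; ring
  have hv_reflect : ∀ i : ℕ, ((k₁ : ℂ) + (k₂ : ℂ) - ((n : ℂ) + 1) / 2 - s) - c
      + (i : ℂ) / 2 + 1 / 2 = 1 - v i := fun i => by simp only [v, c]; ring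
  rw [hd, hd]
  simp only [hw_reflect, hv_reflect]
  refine prod_Gamma_one_sub_div_eq (fun i hi => Gamma_ne_zero fun k => ?_)
    (fun i hi => Gamma_ne_zero fun k => (hreg i hi k).2.1) hsin
  rw [← hv_reflect]
  exact (hreg i hi k).2.2.2

/-- Symmetry of the gamma factor `δ_n(s)` under `s ↦ k₁ + k₂ - (n+1)/2 - s`,
away from the poles of the gamma functions involved. -/
theorem gamma_factor_symmetry (n : ℕ) (hn : Even n) (hpos : 0 < n) (k₁ k₂ : ℝ)
    (N : ℕ) (hN : N = if n % 4 = 0 then n / 2 else n / 2 - 1)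
    (d : ℂ → ℂ)
    (hd : ∀ s : ℂ, d s = ∏ i ∈ Finset.Icc 1 N,
      Complex.Gamma (s - ((k₁ : ℂ) + (k₂ : ℂ)) / 2 + ((n : ℂ) - (i : ℂ) + 2) / 2) /
        Complex.Gamma (s - ((k₁ : ℂ) + (k₂ : ℂ)) / 2 + (i : ℂ) / 2 + 1 / 2))
    (s : ℂ)
    (hreg : ∀ i ∈ Finset.Icc 1 N, ∀ m : ℕ,
      (s - ((k₁ : ℂ) + (k₂ : ℂ)) / 2 + ((n : ℂ) - (i : ℂ) + 2) / 2 ≠ -(m : ℂ)) ∧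
      (s - ((k₁ : ℂ) + (k₂ : ℂ)) / 2 + (i : ℂ) / 2 + 1 / 2 ≠ -(m : ℂ)) ∧
      (((k₁ : ℂ) + (k₂ : ℂ) - ((n : ℂ) + 1) / 2 - s) - ((k₁ : ℂ) + (k₂ : ℂ)) / 2
          + ((n : ℂ) - (i : ℂ) + 2) / 2 ≠ -(m : ℂ)) ∧
      (((k₁ : ℂ) + (k₂ : ℂ) - ((n : ℂ) + 1) / 2 - s) - ((k₁ : ℂ) + (k₂ : ℂ)) / 2
          + (i : ℂ) / 2 + 1 / 2 ≠ -(m : ℂ))) :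
    d ((k₁ : ℂ) + (k₂ : ℂ) - ((n : ℂ) + 1) / 2 - s) = d s :=
  gamma_factor_symmetry_general n hn k₁ k₂ N hN d hd s hreg
end
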